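/- arXiv:1401.6285 — 3 statements merged into one kernel-verified Lean document; each statement's English description precedes it below -/
import Mathlib

section
/- For any integers Y₁ ≤ Y₂ and any integer γ', the number of integers Y with Y₁ ≤ Y ≤ Y₂ satisfying (24·Y + γ') mod 65 ≥ 41 equals ⌊(24(Y₂ + 1) + γ')/65⌋ − ⌊(24·Y₁ + γ')/65⌋. -/
open Finset

theorem Finset.sum_Ico_int_add_one_sub {G : Type*} [AddCommGroup G] (f : ℤ → G) {a b : ℤ}
    (hab : a ≤ b) : ∑ n ∈ Ico a b, (f (n + 1) - f n) = f b - f a := by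
  induction b, hab using Int.leInduction with
  | base => simp
  | succ b hab ih =>
    rw [Ico_add_one_right_eq_Icc, ← Ico_insert_right hab, sum_insert right_notMem_Ico, ih]
    abel

namespace Int

variable {m a : ℤ}

theorem add_ediv_sub_ediv (x : ℤ) (hm : 0 < m) (ha : 0 ≤ a) (ham : a ≤ m) :
    (x + a) / m - x / m = if m - a ≤ x % m then 1 else 0 := by
  have hx : x + a = (x % m + a) + m * (x / m) := by linarith [emod_add_mul_ediv x m]
  rw [hx, add_mul_ediv_left _ _ hm.ne', add_sub_cancel_right]
  have hr := emod_nonneg x hm.ne'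
  have hrm := emod_lt_of_pos x hm
  split_ifs with hcarry
  · exact ((Int.ediv_emod_unique (r := x % m + a - m) hm).2 ⟨by ring, by omega, by omega⟩).1
  · exact ediv_eq_zero_of_lt (by omega) (by omega)

/-- `⌊(a * Y + c) / m⌋` grows by one from `Y` to `Y + 1` exactly when `(a * Y + c) % m ≥ m - a`,
so counting such `Y` telescopes. -/
theorem card_filter_Icc_sub_le_emod (c : ℤ) {Y₁ Y₂ : ℤ} (hm : 0 < m) (ha : 0 ≤ a) (ham : a ≤ m)
    (hY : Y₁ ≤ Y₂ + 1) :
    (#{Y ∈ Icc Y₁ Y₂ | m - a ≤ (a * Y + c) % m} : ℤ) = (a * (Y₂ + 1) + c) / m - (a * Y₁ + c) / m := by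
  have hjump (Y : ℤ) : (a * (Y + 1) + c) / m - (a * Y + c) / m =
      if m - a ≤ (a * Y + c) % m then 1 else 0 := by
    rw [show a * (Y + 1) + c = a * Y + c + a by ring]
    exact add_ediv_sub_ediv _ hm ha ham
  rw [natCast_card_filter, ← Ico_add_one_right_eq_Icc,
    ← sum_Ico_int_add_one_sub (fun Y => (a * Y + c) / m) (by omega)]
  exact sum_congr rfl fun Y _ => (hjump Y).symm

end Int

/-- The number of leap years `Y` with `Y₁ ≤ Y ≤ Y₂`, i.e. satisfying
`(24·Y + γ') mod 65 ≥ 41`, equals `⌊(24(Y₂+1) + γ')/65⌋ − ⌊(24·Y₁ + γ')/65⌋`. -/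
theorem leap_year_count (Y₁ Y₂ γ' : ℤ) (h : Y₁ ≤ Y₂) :
    (((Finset.Icc Y₁ Y₂).filter (fun Y => (24 * Y + γ') % 65 ≥ 41)).card : ℤ) =
      (24 * (Y₂ + 1) + γ') / 65 - (24 * Y₁ + γ') / 65 :=
  Int.card_filter_Icc_sub_le_emod γ' (by norm_num) (by norm_num) (by norm_num) (by omega)
end

section
/- For every integer n and every integer β, the equality ⌈(65n + β)/67⌉ = ⌈(65(n+1) + β)/67⌉ holds if and only if (65n + β) mod 67 ∈ {1, 2}. -/
lemma ceil_int_div (m : ℤ) (d : ℕ) : ⌈((m : ℚ) / d)⌉ = -((-m) / (d : ℤ)) := by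
  rw [← Rat.floor_intCast_div_natCast (-m) d]
  push_cast
  rw [neg_div, Int.floor_neg, neg_neg]

/-- A month with true month count `n` is a leap month (gets the same cumulative
number `⌈(65n + β)/67⌉` as the following month) iff `(65n + β) mod 67 ∈ {1, 2}`. -/
theorem leap_month_criterion (n β : ℤ) :
    ⌈((65 * n + β : ℤ) : ℚ) / 67⌉ = ⌈((65 * (n + 1) + β : ℤ) : ℚ) / 67⌉ ↔
      ((65 * n + β) % 67 = 1 ∨ (65 * n + β) % 67 = 2) := by
  have h1 := ceil_int_div (65 * n + β) 67
  have h2 := ceil_int_div (65 * (n + 1) + β) 67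
  push_cast at h1 h2 ⊢
  rw [h1, h2]
  omega
end

section
/- Let β = 123 and define, for a regular (non-leap) month, n(Y, M) = ⌊(67·(12(Y − Y₀) + M − 3) + 61 + 17)/65⌋. Then for all integers Y, M with 1 ≤ M ≤ 12, setting x = ⌈(65·n(Y,M) + β)/67⌉, one has x amod 12 = M and ⌈x/12⌉ − 1 + Y₀ = Y, provided (65·n(Y,M) + β) mod 67 ∉ {1, 2}. -/
/-- The adjusted modulus: the unique representative of `m` modulo `n` in `{1, ..., n}`. -/
def amod (m n : ℤ) : ℤ := 1 + (m - 1) % n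

/-- Inversion of the Phugpa true month count: for a regular month `(Y, M)` with
true month count `n = ⌊(67·(12(Y − Y₀) + M − 3) + 61 + 17)/65⌋`, setting
`x = ⌈(65n + 123)/67⌉` recovers `M = x amod 12` and `Y = ⌈x/12⌉ − 1 + Y₀`,
provided `(65n + 123) mod 67 ∉ {1, 2}`. -/
theorem true_month_inverse (Y₀ Y M : ℤ) (hM1 : 1 ≤ M) (hM2 : M ≤ 12)
    (n : ℤ) (hn : n = (67 * (12 * (Y - Y₀) + M - 3) + 61 + 17) / 65)
    (x : ℤ) (hx : x = ⌈((65 * n + 123 : ℤ) : ℚ) / 67⌉)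
    (hreg : (65 * n + 123) % 67 ≠ 1 ∧ (65 * n + 123) % 67 ≠ 2) :
    amod x 12 = M ∧ ⌈(x : ℚ) / 12⌉ - 1 + Y₀ = Y := by
  set k : ℤ := 12 * (Y - Y₀) + M - 3 with hk
  set a : ℤ := 67 * k + 61 + 17 with ha
  have hdiv : 65 * (a / 65) + a % 65 = a := Int.mul_ediv_add_emod a 65
  have hr0 : 0 ≤ a % 65 := Int.emod_nonneg a (by norm_num)
  have hr1 : a % 65 < 65 := Int.emod_lt_of_pos a (by norm_num)
  have hkey : 65 * n + 123 = 67 * (k + 3) - a % 65 := by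
    rw [hn]; omega
  have hxv : x = k + 3 := by
    rw [hx, Int.ceil_eq_iff]
    constructor
    · rw [lt_div_iff₀ (by norm_num : (0:ℚ) < 67)]
      have h : (k + 3 - 1) * 67 < 65 * n + 123 := by omega
      exact_mod_cast h
    · rw [div_le_iff₀ (by norm_num : (0:ℚ) < 67)]
      have h : 65 * n + 123 ≤ (k + 3) * 67 := by omega
      exact_mod_cast h
  have hxM : x = 12 * (Y - Y₀) + M := by omega
  constructor
  · have : (x - 1) % 12 = M - 1 := by omega
    simp [amod, this]
  · have hceil : ⌈(x : ℚ) / 12⌉ = Y - Y₀ + 1 := by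
      rw [Int.ceil_eq_iff]
      constructor
      · rw [lt_div_iff₀ (by norm_num : (0:ℚ) < 12)]
        have h : (Y - Y₀ + 1 - 1) * 12 < x := by omega
        exact_mod_cast h
      · rw [div_le_iff₀ (by norm_num : (0:ℚ) < 12)]
        have h : x ≤ (Y - Y₀ + 1) * 12 := by omega
        exact_mod_cast h
    rw [hceil]; ring
end
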